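/- arXiv:2010.10549 — 2 statements merged into one kernel-verified Lean document; each statement's English description precedes it below -/
import Mathlib

section
/- Fix C ∈ (0,1). The function a ↦ Φ'(Φ⁻¹(a)) − Φ'(Φ⁻¹(a + C)) is strictly increasing on (0, 1 − C); consequently, for every value v in its range (−Φ'(Φ⁻¹(C)), Φ'(Φ⁻¹(C))) there is a unique a ∈ (0, 1 − C) with Φ'(Φ⁻¹(a)) − Φ'(Φ⁻¹(a + C)) = v. -/
open MeasureTheory ProbabilityTheory Real

noncomputable section

/-- The standard normal cumulative distribution function Φ. -/
def Phi (x : ℝ) : ℝ := ((gaussianReal 0 1) (Set.Iic x)).toReal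

/-- The inverse Φ⁻¹ of the standard normal CDF (meaningful on (0,1)). -/
def PhiInv : ℝ → ℝ := Function.invFun Phi

/-- The standard normal probability density function Φ'. -/
def stdPdf (x : ℝ) : ℝ := Real.exp (-x ^ 2 / 2) / Real.sqrt (2 * Real.pi)

/-- `Φ(Φ⁻¹(y) - c)` with the conventions `Φ⁻¹(0) = -∞`, `Φ⁻¹(1) = +∞`,
`Φ(-∞ - c) = 0`, `Φ(+∞ - c) = 1`. -/
def PhiShift (c y : ℝ) : ℝ := if y ≤ 0 then 0 else if 1 ≤ y then 1 else Phi (PhiInv y - c)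

/-- `Φ'(Φ⁻¹(y))` with the conventions `Φ⁻¹(0) = -∞`, `Φ⁻¹(1) = +∞`, `Φ'(±∞) = 0`. -/
def pdfAtQuantile (y : ℝ) : ℝ := if y ≤ 0 then 0 else if 1 ≤ y then 0 else stdPdf (PhiInv y)

/-- The isotropic Gaussian measure `N(0, σ²I_d)` on `ℝ^d`. -/
def gaussPi (σ : ℝ) (d : ℕ) : Measure (EuclideanSpace ℝ (Fin d)) :=
  Measure.map (MeasurableEquiv.toLp 2 (Fin d → ℝ))
    (Measure.pi fun _ : Fin d => gaussianReal 0 (Real.toNNReal (σ ^ 2)))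

/-- The Gaussian-smoothed function `p_a(x) = E_{ε ~ N(0,σ²I_d)}[f(x+ε)]`. -/
def smoothed (σ : ℝ) (d : ℕ) (f : EuclideanSpace ℝ (Fin d) → ℝ)
    (x : EuclideanSpace ℝ (Fin d)) : ℝ := ∫ ε, f (x + ε) ∂(gaussPi σ d)

/-- A centered real random variable `Z` is `(a,b)`-subexponential if `E[Z] = 0` and
`E[exp (l Z)] ≤ exp (a² l² / 2)` for all `|l| ≤ 1/b`. -/
def IsSubexponential {Ω : Type*} [MeasurableSpace Ω] (μ : Measure Ω) (Z : Ω → ℝ)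
    (a b : ℝ) : Prop :=
  (∫ ω, Z ω ∂μ) = 0 ∧
    ∀ l : ℝ, |l| ≤ 1 / b → (∫ ω, Real.exp (l * Z ω) ∂μ) ≤ Real.exp (a ^ 2 * l ^ 2 / 2)

/-!
Differentiating `Φ ∘ Φ⁻¹ = id` and using `Φ''(x) = -x Φ'(x)` gives `(Φ' ∘ Φ⁻¹)' = -Φ⁻¹`, so the
derivative of `a ↦ Φ'(Φ⁻¹ a) - Φ'(Φ⁻¹ (a + C))` is `Φ⁻¹ (a + C) - Φ⁻¹ a > 0`. Since `Φ' ∘ Φ⁻¹`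
tends to `0` at both ends of `(0, 1)` and is invariant under `a ↦ 1 - a`, the function runs from
`-Φ'(Φ⁻¹ C)` at `0⁺` to `Φ'(Φ⁻¹ C)` at `(1 - C)⁻`, and the intermediate value theorem gives each
value in between, exactly once by strict monotonicity.
-/

open Filter Set Topology

theorem StrictMonoOn.existsUnique_eq_of_tendsto {α δ : Type*} [ConditionallyCompleteLinearOrder α]
    [TopologicalSpace α] [OrderTopology α] [DenselyOrdered α] [LinearOrder δ] [TopologicalSpace δ]
    [OrderClosedTopology δ] {f : α → δ} {a b : α} {l u v : δ} (hab : a < b)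
    (hf : StrictMonoOn f (Ioo a b)) (hf_cont : ContinuousOn f (Ioo a b))
    (ha : Tendsto f (𝓝[>] a) (𝓝 l)) (hb : Tendsto f (𝓝[<] b) (𝓝 u)) (hv : v ∈ Ioo l u) :
    ∃! x, x ∈ Ioo a b ∧ f x = v := by
  have ha_ne : (𝓝[>] a).NeBot := nhdsGT_neBot_of_exists_gt ⟨b, hab⟩
  have hb_ne : (𝓝[<] b).NeBot := nhdsLT_neBot_of_exists_lt ⟨a, hab⟩
  rw [← nhdsWithin_Ioo_eq_nhdsGT hab] at ha ha_ne
  rw [← nhdsWithin_Ioo_eq_nhdsLT hab] at hb hb_ne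
  obtain ⟨x, hx, hfx⟩ := isPreconnected_Ioo.intermediate_value_Ioo (l₁ := 𝓝[Ioo a b] a)
    (l₂ := 𝓝[Ioo a b] b) inf_le_right inf_le_right hf_cont ha hb hv
  exact ⟨x, ⟨hx, hfx⟩, fun y ⟨hy, hfy⟩ => hf.injOn hy hx (hfy.trans hfx.symm)⟩

lemma stdPdf_eq_gaussianPDFReal : stdPdf = gaussianPDFReal 0 1 := by
  ext x
  simp [stdPdf, gaussianPDFReal, div_eq_inv_mul, mul_comm]

lemma stdPdf_pos (x : ℝ) : 0 < stdPdf x := by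
  rw [stdPdf_eq_gaussianPDFReal]; exact gaussianPDFReal_pos 0 1 x one_ne_zero

lemma stdPdf_neg (x : ℝ) : stdPdf (-x) = stdPdf x := by simp [stdPdf]

lemma continuous_stdPdf : Continuous stdPdf := by
  unfold stdPdf; fun_prop

lemma integrable_stdPdf : Integrable stdPdf := by
  rw [stdPdf_eq_gaussianPDFReal]; exact integrable_gaussianPDFReal 0 1

lemma integral_stdPdf : ∫ t, stdPdf t = 1 := by
  rw [stdPdf_eq_gaussianPDFReal]; exact integral_gaussianPDFReal_eq_one 0 one_ne_zero

lemma hasDerivAt_stdPdf (x : ℝ) : HasDerivAt stdPdf (-x * stdPdf x) x := by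
  have h : HasDerivAt (fun x : ℝ => -x ^ 2 / 2) (-x) x :=
    ((hasDerivAt_pow 2 x).neg.div_const 2).congr_deriv (by ring)
  exact (h.exp.div_const (Real.sqrt (2 * Real.pi))).congr_deriv (by rw [stdPdf]; ring)

lemma tendsto_stdPdf_atTop : Tendsto stdPdf atTop (𝓝 0) := by
  have h : Tendsto (fun x : ℝ => -x ^ 2 / 2) atTop atBot :=
    (tendsto_neg_atBot_iff.2 (tendsto_pow_atTop two_ne_zero)).atBot_div_const two_pos
  have := (Real.tendsto_exp_atBot.comp h).div_const (Real.sqrt (2 * Real.pi))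
  rwa [zero_div] at this

lemma tendsto_stdPdf_atBot : Tendsto stdPdf atBot (𝓝 0) :=
  (tendsto_stdPdf_atTop.comp tendsto_neg_atBot_atTop).congr stdPdf_neg

lemma Phi_eq_cdf : Phi = cdf (gaussianReal 0 1) := by
  ext x; rw [cdf_eq_real, measureReal_def, Phi]

lemma Phi_eq_integral (x : ℝ) : Phi x = ∫ t in Iic x, stdPdf t := by
  rw [Phi, gaussianReal_apply_eq_integral 0 one_ne_zero,
    ENNReal.toReal_ofReal (integral_nonneg fun t => gaussianPDFReal_nonneg 0 1 t),
    stdPdf_eq_gaussianPDFReal]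

lemma hasDerivAt_Phi (x : ℝ) : HasDerivAt Phi (stdPdf x) x := by
  have h : ∀ y, Phi y = Phi 0 + ∫ t in (0 : ℝ)..y, stdPdf t := fun y => by
    rw [Phi_eq_integral, Phi_eq_integral, ← intervalIntegral.integral_Iic_sub_Iic
      integrable_stdPdf.integrableOn integrable_stdPdf.integrableOn]
    ring
  rw [funext h]
  exact (intervalIntegral.integral_hasDerivAt_right integrable_stdPdf.intervalIntegrable
    continuous_stdPdf.stronglyMeasurable.stronglyMeasurableAtFilter
    continuous_stdPdf.continuousAt).const_add _

lemma continuous_Phi : Continuous Phi :=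
  continuous_iff_continuousAt.2 fun x => (hasDerivAt_Phi x).continuousAt

lemma strictMono_Phi : StrictMono Phi :=
  strictMono_of_deriv_pos fun x => (hasDerivAt_Phi x).deriv ▸ stdPdf_pos x

lemma tendsto_Phi_atTop : Tendsto Phi atTop (𝓝 1) := Phi_eq_cdf ▸ tendsto_cdf_atTop _

lemma tendsto_Phi_atBot : Tendsto Phi atBot (𝓝 0) := Phi_eq_cdf ▸ tendsto_cdf_atBot _

lemma Phi_mem_Ioo (x : ℝ) : Phi x ∈ Ioo (0 : ℝ) 1 :=
  ⟨(strictMono_Phi.monotone.le_of_tendsto tendsto_Phi_atBot (x - 1)).trans_lt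
      (strictMono_Phi (sub_one_lt x)),
    (strictMono_Phi (lt_add_one x)).trans_le
      (strictMono_Phi.monotone.ge_of_tendsto tendsto_Phi_atTop (x + 1))⟩

lemma range_Phi : range Phi = Ioo 0 1 := by
  refine (range_subset_iff.2 Phi_mem_Ioo).antisymm fun y hy => ?_
  obtain ⟨a, ha⟩ := (tendsto_Phi_atBot.eventually_le_const hy.1).exists
  obtain ⟨b, hb⟩ := (tendsto_Phi_atTop.eventually_const_le hy.2).exists
  exact mem_range_of_exists_le_of_exists_ge continuous_Phi ⟨a, ha⟩ ⟨b, hb⟩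

lemma Phi_neg (x : ℝ) : Phi (-x) = 1 - Phi x := by
  have h_upper := integral_comp_neg_Iic (-x) stdPdf
  simp only [stdPdf_neg, neg_neg] at h_upper
  rw [Phi_eq_integral, h_upper, Phi_eq_integral, ← integral_stdPdf,
    ← intervalIntegral.integral_Iic_add_Ioi integrable_stdPdf.integrableOn
      integrable_stdPdf.integrableOn]
  ring

lemma Phi_PhiInv {y : ℝ} (hy : y ∈ Ioo (0 : ℝ) 1) : Phi (PhiInv y) = y :=
  Function.invFun_eq (range_Phi ▸ hy : y ∈ range Phi)

lemma PhiInv_Phi (x : ℝ) : PhiInv (Phi x) = x :=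
  Function.leftInverse_invFun strictMono_Phi.injective x

lemma PhiInv_one_sub {y : ℝ} (hy : y ∈ Ioo (0 : ℝ) 1) : PhiInv (1 - y) = -PhiInv y := by
  have h := Phi_neg (PhiInv y)
  rw [Phi_PhiInv hy] at h
  rw [← h, PhiInv_Phi]

lemma strictMonoOn_PhiInv : StrictMonoOn PhiInv (Ioo (0 : ℝ) 1) := fun y₁ h₁ y₂ h₂ h => by
  rwa [← strictMono_Phi.lt_iff_lt, Phi_PhiInv h₁, Phi_PhiInv h₂]

lemma image_PhiInv_Ioo : PhiInv '' Ioo 0 1 = univ :=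
  eq_univ_of_forall fun x => ⟨Phi x, Phi_mem_Ioo x, PhiInv_Phi x⟩

lemma continuousAt_PhiInv {y : ℝ} (hy : y ∈ Ioo (0 : ℝ) 1) : ContinuousAt PhiInv y := by
  refine strictMonoOn_PhiInv.continuousAt_of_image_mem_nhds (Ioo_mem_nhds hy.1 hy.2) ?_
  rw [image_PhiInv_Ioo]
  exact univ_mem

lemma hasDerivAt_PhiInv {y : ℝ} (hy : y ∈ Ioo (0 : ℝ) 1) :
    HasDerivAt PhiInv (stdPdf (PhiInv y))⁻¹ y :=
  (hasDerivAt_Phi _).of_local_left_inverse (continuousAt_PhiInv hy)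
    (stdPdf_pos _).ne' (eventually_of_mem (Ioo_mem_nhds hy.1 hy.2) fun _ => Phi_PhiInv)

lemma tendsto_PhiInv_nhdsGT_zero : Tendsto PhiInv (𝓝[>] 0) atBot := by
  refine tendsto_atBot.2 fun x => ?_
  filter_upwards [Ioo_mem_nhdsGT (Phi_mem_Ioo x).1] with y hy
  rw [← strictMono_Phi.le_iff_le, Phi_PhiInv ⟨hy.1, hy.2.trans (Phi_mem_Ioo x).2⟩]
  exact hy.2.le

lemma tendsto_PhiInv_nhdsLT_one : Tendsto PhiInv (𝓝[<] 1) atTop := by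
  refine tendsto_atTop.2 fun x => ?_
  filter_upwards [Ioo_mem_nhdsLT (Phi_mem_Ioo x).2] with y hy
  rw [← strictMono_Phi.le_iff_le, Phi_PhiInv ⟨(Phi_mem_Ioo x).1.trans hy.1, hy.2⟩]
  exact hy.1.le

lemma hasDerivAt_stdPdf_PhiInv {y : ℝ} (hy : y ∈ Ioo (0 : ℝ) 1) :
    HasDerivAt (fun y => stdPdf (PhiInv y)) (-PhiInv y) y := by
  refine ((hasDerivAt_stdPdf (PhiInv y)).comp y (hasDerivAt_PhiInv hy)).congr_deriv ?_
  rw [mul_assoc, mul_inv_cancel₀ (stdPdf_pos _).ne', mul_one]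

lemma stdPdf_PhiInv_one_sub {y : ℝ} (hy : y ∈ Ioo (0 : ℝ) 1) :
    stdPdf (PhiInv (1 - y)) = stdPdf (PhiInv y) := by
  rw [PhiInv_one_sub hy, stdPdf_neg]

lemma tendsto_stdPdf_PhiInv_nhdsGT_zero :
    Tendsto (fun y => stdPdf (PhiInv y)) (𝓝[>] 0) (𝓝 0) :=
  tendsto_stdPdf_atBot.comp tendsto_PhiInv_nhdsGT_zero

lemma tendsto_stdPdf_PhiInv_nhdsLT_one :
    Tendsto (fun y => stdPdf (PhiInv y)) (𝓝[<] 1) (𝓝 0) :=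
  tendsto_stdPdf_atTop.comp tendsto_PhiInv_nhdsLT_one

def quantileDensityGap (C a : ℝ) : ℝ := stdPdf (PhiInv a) - stdPdf (PhiInv (a + C))

section quantileDensityGap

variable {C : ℝ}

lemma hasDerivAt_quantileDensityGap (hC : 0 ≤ C) {a : ℝ} (ha : a ∈ Ioo 0 (1 - C)) :
    HasDerivAt (quantileDensityGap C) (PhiInv (a + C) - PhiInv a) a := by
  have h₁ : a ∈ Ioo (0 : ℝ) 1 := ⟨ha.1, by linarith [ha.2]⟩
  have h₂ : a + C ∈ Ioo (0 : ℝ) 1 := ⟨by linarith [ha.1], by linarith [ha.2]⟩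
  have h_shift := (hasDerivAt_stdPdf_PhiInv h₂).comp a ((hasDerivAt_id a).add_const C)
  exact ((hasDerivAt_stdPdf_PhiInv h₁).sub h_shift).congr_deriv (by ring)

lemma continuousOn_quantileDensityGap (hC : 0 ≤ C) :
    ContinuousOn (quantileDensityGap C) (Ioo 0 (1 - C)) := fun _ ha =>
  (hasDerivAt_quantileDensityGap hC ha).continuousAt.continuousWithinAt

lemma strictMonoOn_quantileDensityGap (hC : 0 < C) :
    StrictMonoOn (quantileDensityGap C) (Ioo 0 (1 - C)) := by
  refine strictMonoOn_of_deriv_pos (convex_Ioo _ _) (continuousOn_quantileDensityGap hC.le)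
    fun a ha => ?_
  rw [interior_Ioo] at ha
  rw [(hasDerivAt_quantileDensityGap hC.le ha).deriv, sub_pos]
  exact strictMonoOn_PhiInv ⟨ha.1, by linarith [ha.2]⟩ ⟨by linarith [ha.1], by linarith [ha.2]⟩
    (lt_add_of_pos_right a hC)

lemma tendsto_quantileDensityGap_nhdsGT_zero (hC : C ∈ Ioo (0 : ℝ) 1) :
    Tendsto (quantileDensityGap C) (𝓝[>] 0) (𝓝 (-stdPdf (PhiInv C))) := by
  have h_shift : Tendsto (· + C) (𝓝[>] (0 : ℝ)) (𝓝 C) :=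
    ((continuous_add_const C).tendsto' 0 C (zero_add C)).mono_left nhdsWithin_le_nhds
  have h := tendsto_stdPdf_PhiInv_nhdsGT_zero.sub
    ((hasDerivAt_stdPdf_PhiInv hC).continuousAt.tendsto.comp h_shift)
  rwa [zero_sub] at h

lemma tendsto_quantileDensityGap_nhdsLT (hC : C ∈ Ioo (0 : ℝ) 1) :
    Tendsto (quantileDensityGap C) (𝓝[<] (1 - C)) (𝓝 (stdPdf (PhiInv C))) := by
  have h_shift : Tendsto (· + C) (𝓝[<] (1 - C)) (𝓝[<] 1) := by
    have h := Filter.map_add_right_nhdsLT (c := C) (a := 1 - C)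
    rw [sub_add_cancel] at h
    exact h.le
  have h₁ : 1 - C ∈ Ioo (0 : ℝ) 1 := ⟨by linarith [hC.2], by linarith [hC.1]⟩
  have h_left := (hasDerivAt_stdPdf_PhiInv h₁).continuousAt.tendsto.mono_left
    (nhdsWithin_le_nhds (s := Iio (1 - C)))
  rw [stdPdf_PhiInv_one_sub hC] at h_left
  have h := h_left.sub (tendsto_stdPdf_PhiInv_nhdsLT_one.comp h_shift)
  rwa [sub_zero] at h

end quantileDensityGap

/-- for fixed `C ∈ (0,1)`, `a ↦ Φ'(Φ⁻¹(a)) - Φ'(Φ⁻¹(a + C))` is strictly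
increasing on `(0, 1-C)`, and every `v` in `(-Φ'(Φ⁻¹(C)), Φ'(Φ⁻¹(C)))` is attained at a
unique `a ∈ (0, 1-C)`. -/
theorem strictMono_and_unique_solution (C : ℝ) (hC : C ∈ Set.Ioo (0 : ℝ) 1) :
    StrictMonoOn (fun a => stdPdf (PhiInv a) - stdPdf (PhiInv (a + C)))
      (Set.Ioo (0 : ℝ) (1 - C)) ∧
    ∀ v ∈ Set.Ioo (-(stdPdf (PhiInv C))) (stdPdf (PhiInv C)),
      ∃! a, a ∈ Set.Ioo (0 : ℝ) (1 - C) ∧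
        stdPdf (PhiInv a) - stdPdf (PhiInv (a + C)) = v := by
  have h_mono := strictMonoOn_quantileDensityGap hC.1
  exact ⟨h_mono, fun v hv => h_mono.existsUnique_eq_of_tendsto (sub_pos.2 hC.2)
    (continuousOn_quantileDensityGap hC.1.le) (tendsto_quantileDensityGap_nhdsGT_zero hC)
    (tendsto_quantileDensityGap_nhdsLT hC) hv⟩
end
end

section
/- Let X be an integrable real random variable and let v be a Bernoulli random variable taking values in {0,1} (defined on the same probability space, possibly dependent on X) with 0 < P(v = 0). Define A := Xv + (1 − v)·E[X | v = 0]. Then for every λ ∈ ℝ for which E[e^{λX}] is finite, E[e^{λA}] ≤ E[e^{λX}]. -/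
/-! On `{v = 0}` the variable `l * A` is the constant `l * E[X | v = 0]`, the average of `l * X`
over that event, and off it `l * A = l * X`. Jensen's inequality for the convex function `exp`,
applied on `{v = 0}` alone, therefore bounds the contribution of that event, and the contributions
of its complement agree. -/

open MeasureTheory ProbabilityTheory Real

noncomputable section

open scoped ENNReal

section Jensen

variable {α : Type*} [MeasurableSpace α] {μ : Measure α} {s : Set ℝ} {t : Set α}
  {f : α → ℝ} {g : ℝ → ℝ}

theorem ConvexOn.setIntegral_map_setAverage_le (hg : ConvexOn ℝ s g) (hgc : ContinuousOn g s)
    (hsc : IsClosed s) (h0 : μ t ≠ 0) (ht : μ t ≠ ∞) (hfs : ∀ᵐ x ∂μ.restrict t, f x ∈ s)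
    (hfi : IntegrableOn f t μ) (hgi : IntegrableOn (g ∘ f) t μ) :
    ∫ _ in t, g (⨍ x in t, f x ∂μ) ∂μ ≤ ∫ x in t, g (f x) ∂μ := by
  rw [setIntegral_const, ← measure_smul_setAverage _ ht]
  exact smul_le_smul_of_nonneg_left (hg.map_set_average_le hgc hsc h0 ht hfs hfi hgi)
    measureReal_nonneg

theorem ConvexOn.integral_map_piecewise_setAverage_le [DecidablePred (· ∈ t)]
    (hg : ConvexOn ℝ s g) (hgc : ContinuousOn g s) (hsc : IsClosed s) (htm : MeasurableSet t)
    (h0 : μ t ≠ 0) (ht : μ t ≠ ∞) (hfs : ∀ᵐ x ∂μ.restrict t, f x ∈ s)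
    (hfi : IntegrableOn f t μ) (hgi : Integrable (g ∘ f) μ) :
    ∫ x, g (t.piecewise (fun _ ↦ ⨍ y in t, f y ∂μ) f x) ∂μ ≤ ∫ x, g (f x) ∂μ := by
  have hconst : IntegrableOn (fun _ ↦ g (⨍ y in t, f y ∂μ)) t μ :=
    integrableOn_const (lt_top_iff_ne_top.2 ht).ne
  calc ∫ x, g (t.piecewise (fun _ ↦ ⨍ y in t, f y ∂μ) f x) ∂μ
      = ∫ x, t.piecewise (fun _ ↦ g (⨍ y in t, f y ∂μ)) (g ∘ f) x ∂μ := by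
        congr 1 with x
        exact t.apply_piecewise _ _ fun _ ↦ g
    _ = ∫ _ in t, g (⨍ y in t, f y ∂μ) ∂μ + ∫ x in tᶜ, g (f x) ∂μ :=
        integral_piecewise htm hconst hgi.integrableOn
    _ ≤ ∫ x in t, g (f x) ∂μ + ∫ x in tᶜ, g (f x) ∂μ :=
        add_le_add_left
          (hg.setIntegral_map_setAverage_le hgc hsc h0 ht hfs hfi hgi.integrableOn) _
    _ = ∫ x, g (f x) ∂μ := integral_add_compl htm hgi

end Jensen

/-- Jensen step: for integrable `X`, a `{0,1}`-valued `v` with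
`P(v = 0) > 0`, and `A := Xv + (1 - v) E[X | v = 0]`, one has `E[e^{λA}] ≤ E[e^{λX}]`
for every `λ` with `E[e^{λX}]` finite. -/
theorem jensen_conditional_replacement {Ω : Type*} [MeasurableSpace Ω]
    (μ : Measure Ω) [IsProbabilityMeasure μ]
    (X v : Ω → ℝ) (hX : Integrable X μ) (hv : Measurable v)
    (hv01 : ∀ ω, v ω = 0 ∨ v ω = 1)
    (h0 : 0 < μ {ω | v ω = 0})
    (A : Ω → ℝ)
    (hA : A = fun ω => X ω * v ω +
      (1 - v ω) * ((∫ ω' in {ω' | v ω' = 0}, X ω' ∂μ) / (μ {ω' | v ω' = 0}).toReal))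
    (l : ℝ) (hl : Integrable (fun ω => Real.exp (l * X ω)) μ) :
    (∫ ω, Real.exp (l * A ω) ∂μ) ≤ ∫ ω, Real.exp (l * X ω) ∂μ := by
  classical
  set S := {ω | v ω = 0}
  have hS : MeasurableSet S := hv (measurableSet_singleton 0)
  have hA_eq :
      (fun ω ↦ l * A ω) = S.piecewise (fun _ ↦ ⨍ y in S, l * X y ∂μ) (fun ω ↦ l * X ω) := by
    funext ω
    rw [setAverage_eq, integral_const_mul, smul_eq_mul, measureReal_def, hA]
    rcases hv01 ω with h | h
    · simp only [h, mul_zero, sub_zero, one_mul, zero_add, Set.piecewise, Set.mem_ofPred_eq,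
        ↓reduceIte, S]
      field_simp
    · simp [S, Set.piecewise, h]
  have key := convexOn_exp.integral_map_piecewise_setAverage_le continuous_exp.continuousOn
    isClosed_univ hS h0.ne' (measure_ne_top μ S) (.of_forall fun _ ↦ Set.mem_univ _)
    (hX.const_mul l).integrableOn hl
  rwa [← hA_eq] at key
end
end
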